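/- For every v ∈ {1,…,V}, the map b ↦ σ(b,v) is non-decreasing on {1,…,B}: if 1 ≤ b ≤ b' ≤ B then σ(b,v) ≤ σ(b',v). -/

import Mathlib

/-!
Write `X = r(v+1) + σ(b,v)`. Then `σ(b,v+1) = h(b) − r(v+1) + (X + min_{s ∈ S} (c(s) − s·X))`,
and `X + min_s (c(s) − s·X) = min_s (c(s) + (1 − s)·X)` is nondecreasing in `X` because every
`s ∈ S` is at most `1`. Monotonicity of `h` and induction on `v` then give `σ(b,v) ≤ σ(b',v)`.
-/

/-- `delta S hS c h r b v` is δ(b,v): δ(b,0) = 0 and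
δ(b,v) = h(b) + min_{s ∈ S} (c(s) − s·(r(v) + Σ_{i=0}^{v−1} δ(b,i))). -/
noncomputable def delta (S : Finset ℝ) (hS : S.Nonempty) (c : ℝ → ℝ) (h r : ℕ → ℝ)
    (b : ℕ) : ℕ → ℝ
  | 0 => 0
  | v + 1 => h b + S.inf' hS (fun s =>
      c s - s * (r (v + 1) + ∑ i ∈ (Finset.range (v + 1)).attach, delta S hS c h r b i.1))
decreasing_by exact Finset.mem_range.mp i.2

/-- `sigma S hS c h r b v` is σ(b,v) = Σ_{i=0}^{v} δ(b,i). -/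
noncomputable def sigma (S : Finset ℝ) (hS : S.Nonempty) (c : ℝ → ℝ) (h r : ℕ → ℝ)
    (b v : ℕ) : ℝ :=
  ∑ i ∈ Finset.range (v + 1), delta S hS c h r b i

lemma delta_succ (S : Finset ℝ) (hS : S.Nonempty) (c : ℝ → ℝ) (h r : ℕ → ℝ) (b v : ℕ) :
    delta S hS c h r b (v + 1) =
      h b + S.inf' hS (fun s => c s - s * (r (v + 1) + sigma S hS c h r b v)) := by
  rw [delta, sigma, Finset.sum_attach]

lemma sigma_zero (S : Finset ℝ) (hS : S.Nonempty) (c : ℝ → ℝ) (h r : ℕ → ℝ) (b : ℕ) :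
    sigma S hS c h r b 0 = 0 := by
  simp [sigma, delta]

lemma sigma_succ (S : Finset ℝ) (hS : S.Nonempty) (c : ℝ → ℝ) (h r : ℕ → ℝ) (b v : ℕ) :
    sigma S hS c h r b (v + 1) = sigma S hS c h r b v + delta S hS c h r b (v + 1) :=
  Finset.sum_range_succ _ _

lemma monotone_add_inf'_sub_mul {S : Finset ℝ} (hS : S.Nonempty) (hS1 : ∀ s ∈ S, s ≤ 1)
    (c : ℝ → ℝ) : Monotone fun X => X + S.inf' hS (fun s => c s - s * X) := by
  intro X Y hXY
  obtain ⟨s, hs, hmin⟩ := S.exists_mem_eq_inf' hS (fun s => c s - s * Y)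
  calc X + S.inf' hS (fun s => c s - s * X)
      ≤ X + (c s - s * X) := by gcongr; exact S.inf'_le _ hs
    _ ≤ Y + (c s - s * Y) := by nlinarith [hS1 s hs]
    _ = Y + S.inf' hS (fun s => c s - s * Y) := by rw [hmin]

lemma sigma_le_sigma_of_le (S : Finset ℝ) (hS : S.Nonempty) (hS1 : ∀ s ∈ S, s ≤ 1) (c : ℝ → ℝ)
    {h : ℕ → ℝ} (hh : Monotone h) (r : ℕ → ℝ) {b b' : ℕ} (hbb' : b ≤ b') (v : ℕ) :
    sigma S hS c h r b v ≤ sigma S hS c h r b' v := by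
  induction v with
  | zero => rw [sigma_zero, sigma_zero]
  | succ v ih =>
    have hX := monotone_add_inf'_sub_mul hS hS1 c (add_le_add_right ih (r (v + 1)))
    simp only [sigma_succ, delta_succ]
    linarith [hh hbb']

theorem stmt7_general
    (S : Finset ℝ) (hS : S.Nonempty) (hS01 : ∀ s ∈ S, s ∈ Set.Icc (0 : ℝ) 1)
    (c : ℝ → ℝ)
    (h : ℕ → ℝ) (hhmono : Monotone h)
    (r : ℕ → ℝ)
    (B V : ℕ)
    :
    ∀ v, 1 ≤ v → v ≤ V → ∀ b b', 1 ≤ b → b ≤ b' → b' ≤ B →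
      sigma S hS c h r b v ≤ sigma S hS c h r b' v :=
  fun v _ _ _ _ _ hbb' _ =>
    sigma_le_sigma_of_le S hS (fun s hs => (hS01 s hs).2) c hhmono r hbb' v

/-- For each v ∈ {1,…,V}, b ↦ σ(b,v) is non-decreasing on {1,…,B}. -/
theorem stmt7
    (S : Finset ℝ) (hS : S.Nonempty) (hS01 : ∀ s ∈ S, s ∈ Set.Icc (0 : ℝ) 1)
    (c : ℝ → ℝ) (hc0 : ∀ s ∈ S, 0 ≤ c s)
    (hcmono : ∀ s ∈ S, ∀ s' ∈ S, s ≤ s' → c s ≤ c s')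
    (h : ℕ → ℝ) (hh0 : ∀ b, 0 ≤ h b) (hhmono : Monotone h)
    (r : ℕ → ℝ) (hrmono : Monotone r) (hr0 : r 0 = 0) (hrpos : ∀ v, 1 ≤ v → 0 < r v)
    (B V : ℕ) (hB : 0 < B) (hV : 0 < V)
    :
    ∀ v, 1 ≤ v → v ≤ V → ∀ b b', 1 ≤ b → b ≤ b' → b' ≤ B →
      sigma S hS c h r b v ≤ sigma S hS c h r b' v :=
  stmt7_general S hS hS01 c h hhmono r B V
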